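/- Let G be the d-dimensional lattice graph and, for d−1 ≤ t ≤ dn−1, let T^{(t)} = Λ_γ(∂D \ J_t^S ; J_t^S) be the submatrix of the Dirichlet-to-Neumann matrix mapping boundary potentials supported on J_t^S to boundary currents measured on ∂D \ J_t^S. Let T₁^{(t)} : ℝ^{J_t^S} → ℝ^{L_{t+1}} send φ to the restriction to L_{t+1} of the γ-harmonic extension of (the zero-extension of) φ, and let T₂^{(t)} : ℝ^{L_{t+1}} → ℝ^{∂D \ J_t^S} be the corresponding partial DtN map of the upper subgraph G^{(t)} above the interface L_{t+1}. Then T^{(t)} = T₂^{(t)} ∘ T₁^{(t)}. -/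

import Mathlib

noncomputable section
open Classical Finset

namespace DiscreteCalderon

/-- Vertices of the ambient lattice `ℤ^d`. -/
abbrev V (d : ℕ) := Fin d → ℤ

/-- Interior vertex set `D = {x : 1 ≤ x_i ≤ n}`. -/
def Dset (d n : ℕ) : Set (V d) := {x | ∀ i, 1 ≤ x i ∧ x i ≤ (n : ℤ)}

/-- ℓ¹ distance. -/
def dist1 {d : ℕ} (p q : V d) : ℤ := ∑ i, |p i - q i|

/-- Boundary vertex set `∂D`: vertices at ℓ¹ distance 1 from `D`. -/
def Bset (d n : ℕ) : Set (V d) := {p | p ∉ Dset d n ∧ ∃ q ∈ Dset d n, dist1 p q = 1}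

/-- All vertices of the graph, `D ∪ ∂D`. -/
def Vset (d n : ℕ) : Set (V d) := Dset d n ∪ Bset d n

/-- Adjacency of the lattice graph: ℓ¹ distance 1, both endpoints vertices,
not both on the boundary. -/
def Adj (d n : ℕ) (p q : V d) : Prop :=
  dist1 p q = 1 ∧ p ∈ Vset d n ∧ q ∈ Vset d n ∧ (p ∈ Dset d n ∨ q ∈ Dset d n)

/-- A finite box containing all vertices. -/
def box (d n : ℕ) : Finset (V d) :=
  Fintype.piFinset (fun _ : Fin d => Finset.Icc (0 : ℤ) ((n : ℤ) + 1))

/-- Neighbours of `p` in the graph, as a finite set. -/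
def nbr (d n : ℕ) (p : V d) : Finset (V d) := (box d n).filter (fun q => Adj d n p q)

/-- Interior neighbours of `p`. -/
def nbrD (d n : ℕ) (p : V d) : Finset (V d) := (nbr d n p).filter (fun q => q ∈ Dset d n)

/-- The discrete (weighted) Laplacian `(Δ_γ u)_p = ∑_{q∈N(p)} γ_{qp}(u_q - u_p)`. -/
def lap (d n : ℕ) (γ : V d → V d → ℝ) (u : V d → ℝ) (p : V d) : ℝ :=
  ∑ q ∈ nbr d n p, γ q p * (u q - u p)

/-- The boundary current `(D_γ u)_p = ∑_{q∈N(p)∩D} γ_{pq}(u_q - u_p)`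
(there is exactly one interior neighbour of a boundary node). -/
def cur (d n : ℕ) (γ : V d → V d → ℝ) (u : V d → ℝ) (p : V d) : ℝ :=
  ∑ q ∈ nbrD d n p, γ p q * (u q - u p)

/-- A strictly positive symmetric conductivity. -/
def GoodCond (d n : ℕ) (γ : V d → V d → ℝ) : Prop :=
  (∀ p q, γ p q = γ q p) ∧ ∀ p q, Adj d n p q → 0 < γ p q

/-- The coordinate sum of a lattice point. -/
def sum1 {d : ℕ} (x : V d) : ℤ := ∑ i, x i

/-- Interior diagonal slice `L_t`. -/
def L (d n : ℕ) (t : ℤ) : Set (V d) := {x | x ∈ Dset d n ∧ sum1 x = t}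

/-- `L_t^S = ∪_{ℓ ≤ t} L_ℓ`. -/
def LS (d n : ℕ) (t : ℤ) : Set (V d) := {x | x ∈ Dset d n ∧ sum1 x ≤ t}

/-- Boundary diagonal slice `K_t`. -/
def K (d n : ℕ) (t : ℤ) : Set (V d) := {x | x ∈ Bset d n ∧ sum1 x = t}

/-- `K_t^- = {x ∈ K_t : min_i x_i = 0}`. -/
def Km (d n : ℕ) (t : ℤ) : Set (V d) := {x | x ∈ K d n t ∧ ∃ i, x i = 0}

/-- `K_t^+ = {x ∈ K_t : max_i x_i = n+1}`. -/
def Kp (d n : ℕ) (t : ℤ) : Set (V d) := {x | x ∈ K d n t ∧ ∃ i, x i = (n : ℤ) + 1}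

/-- `K_t^{S-} = ∪_{ℓ ≤ t} K_ℓ^-`. -/
def KSm (d n : ℕ) (t : ℤ) : Set (V d) := {x | x ∈ Bset d n ∧ sum1 x ≤ t ∧ ∃ i, x i = 0}

/-- `K_t^{S+} = ∪_{ℓ ≤ t} K_ℓ^+`. -/
def KSp (d n : ℕ) (t : ℤ) : Set (V d) := {x | x ∈ Bset d n ∧ sum1 x ≤ t ∧ ∃ i, x i = (n : ℤ) + 1}

/-- The lower boundary region `J_t^S = K_t^{S-} ∪ K_{t+1}^{S+}`. -/
def JS (d n : ℕ) (t : ℤ) : Set (V d) := KSm d n t ∪ KSp d n (t + 1)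

/-- `J_t = K_t^- ∪ K_{t+1}^+`. -/
def Jslice (d n : ℕ) (t : ℤ) : Set (V d) := Km d n t ∪ Kp d n (t + 1)

/-- `u` is the γ-harmonic extension of boundary data `φ` (zero-extension convention
outside `D ∪ ∂D`). -/
def IsSol (d n : ℕ) (γ : V d → V d → ℝ) (φ u : V d → ℝ) : Prop :=
  (∀ p, p ∉ Vset d n → u p = 0) ∧
  (∀ p ∈ Dset d n, lap d n γ u p = 0) ∧
  (∀ p ∈ Bset d n, u p = φ p)

/-- The Laplacian row vector `v_p`. -/
def vrow (d n : ℕ) (γ : V d → V d → ℝ) (p : V d) : V d → ℝ := fun q =>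
  if Adj d n p q then γ p q
  else if q = p then -(∑ r ∈ nbr d n p, γ p r) else 0

/-- Restriction of a function to a set (zero outside). -/
def rst {d : ℕ} (S : Set (V d)) (f : V d → ℝ) : V d → ℝ := fun q => if q ∈ S then f q else 0

/-- Euclidean inner product of (vertex-supported) functions. -/
def dot (d n : ℕ) (f g : V d → ℝ) : ℝ := ∑ p ∈ box d n, f p * g p

/-- The localized solution space `𝒰^{(t)}`: restrictions to `L_t^S ∪ J_t^S` of
harmonic extensions of boundary potentials in `ker T₁^{(t)}`. -/
def Uset (d n : ℕ) (γ : V d → V d → ℝ) (t : ℤ) : Set (V d → ℝ) :=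
  {u | (∀ p, p ∉ LS d n t ∪ JS d n t → u p = 0) ∧
    ∃ φ w : V d → ℝ, (∀ p, p ∉ JS d n t → φ p = 0) ∧ IsSol d n γ φ w ∧
      (∀ p ∈ L d n (t + 1), w p = 0) ∧ ∀ p ∈ LS d n t ∪ JS d n t, u p = w p}

/-- The set `E_t` of edges between the consecutive layers:
`E(K_t^-, L_{t+1}) ∪ E(L_t, K_{t+1}^+) ∪ E(L_t, L_{t+1})`. -/
def EdgeT (d n : ℕ) (t : ℤ) (p q : V d) : Prop :=
  Adj d n p q ∧
    ((p ∈ Km d n t ∧ q ∈ L d n (t + 1)) ∨ (q ∈ Km d n t ∧ p ∈ L d n (t + 1)) ∨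
     (p ∈ L d n t ∧ q ∈ Kp d n (t + 1)) ∨ (q ∈ L d n t ∧ p ∈ Kp d n (t + 1)) ∨
     (p ∈ L d n t ∧ q ∈ L d n (t + 1)) ∨ (q ∈ L d n t ∧ p ∈ L d n (t + 1)))

/-- The edge vector `J_p^u ∈ ℝ^{E_t}`, `J_p^u(pq) = u_p - u_q` on edges of `E_t`
incident to `p`, and `0` otherwise (as a symmetric function of edge endpoints). -/
def Jvec (d n : ℕ) (t : ℤ) (u : V d → ℝ) (p : V d) : V d → V d → ℝ := fun a b =>
  if EdgeT d n t a b then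
    (if a = p then u a - u b else if b = p then u b - u a else 0)
  else 0

/-- Inner product of edge functions. -/
def dotE (d n : ℕ) (f g : V d → V d → ℝ) : ℝ :=
  ∑ p ∈ box d n, ∑ q ∈ box d n, f p q * g p q

/-!
Put `v = u - w` on the part `A` of `D` strictly above the interface `L_{t+1}`. Both `u` and `w`
are `γ`-harmonic on `A`, and `v` vanishes on every vertex adjacent to `A` outside it: such a vertex
lies either on `L_{t+1}`, where `w = u`, or on `∂D \ J_t^S`, where both boundary values are zero.
The Green identity `2 ∑ v Δv = -∑ γ (∇v)²` then makes `v` constant along edges, and walking down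
the diagonals leaves `A`, so `v = 0`. Finally every boundary vertex outside `J_t^S` has its interior
neighbour on or above `L_{t+1}`, so the two currents there are computed from the same values.
-/

section Lattice

variable {d n : ℕ}

lemma dist1_comm (p q : V d) : dist1 p q = dist1 q p :=
  Finset.sum_congr rfl fun _ _ => abs_sub_comm _ _

lemma Adj.symm {p q : V d} (h : Adj d n p q) : Adj d n q p :=
  ⟨dist1_comm p q ▸ h.1, h.2.2.1, h.2.1, h.2.2.2.symm⟩

lemma abs_sub_le_dist1 (p q : V d) (i : Fin d) : |p i - q i| ≤ dist1 p q :=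
  Finset.single_le_sum (f := fun j => |p j - q j|) (fun _ _ => abs_nonneg _) (mem_univ i)

lemma abs_sum1_sub_sum1_le_dist1 (p q : V d) : |sum1 p - sum1 q| ≤ dist1 p q := by
  rw [sum1, sum1, ← Finset.sum_sub_distrib]
  exact Finset.abs_sum_le_sum_abs _ _

lemma eq_of_dist1_eq_one_of_ne {p q : V d} (h : dist1 p q = 1) {i j : Fin d}
    (hi : p i ≠ q i) (hji : j ≠ i) : p j = q j := by
  have hi1 : 1 ≤ |p i - q i| := Int.one_le_abs (sub_ne_zero.mpr hi)
  have hij : |p i - q i| + |p j - q j| ≤ dist1 p q :=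
    Finset.add_le_sum (f := fun k => |p k - q k|) (fun _ _ => abs_nonneg _) (mem_univ i) (mem_univ j) hji.symm
  have hj0 : |p j - q j| = 0 := le_antisymm (by linarith) (abs_nonneg _)
  exact sub_eq_zero.mp (abs_eq_zero.mp hj0)

lemma sum1_sub_sum1_of_dist1_eq_one {p q : V d} (h : dist1 p q = 1) {i : Fin d}
    (hi : p i ≠ q i) : sum1 q - sum1 p = q i - p i := by
  rw [sum1, sum1, ← Finset.sum_sub_distrib, Finset.sum_eq_single i]
  · intro j _ hj
    rw [eq_of_dist1_eq_one_of_ne h hi hj, sub_self]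
  · simp

lemma sum1_eq_sub_one_of_dist1_eq_one {p q : V d} (hp : p ∈ Dset d n) (h : dist1 p q = 1)
    {i : Fin d} (hq : q i = 0) : sum1 q = sum1 p - 1 := by
  have hpi := hp i
  have hle := abs_le.mp (abs_sub_le_dist1 p q i)
  have := sum1_sub_sum1_of_dist1_eq_one h (i := i) (by omega)
  omega

lemma sum1_eq_add_one_of_dist1_eq_one {p q : V d} (hp : p ∈ Dset d n) (h : dist1 p q = 1)
    {i : Fin d} (hq : q i = n + 1) : sum1 q = sum1 p + 1 := by
  have hpi := hp i
  have hle := abs_le.mp (abs_sub_le_dist1 p q i)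
  have := sum1_sub_sum1_of_dist1_eq_one h (i := i) (by omega)
  omega

lemma exists_eq_zero_or_eq_add_one_of_dist1_eq_one {p q : V d} (hp : p ∉ Dset d n)
    (hq : q ∈ Dset d n) (h : dist1 p q = 1) : ∃ i, p i = 0 ∨ p i = n + 1 := by
  obtain ⟨i, hi⟩ : ∃ i, ¬(1 ≤ p i ∧ p i ≤ n) := by
    by_contra! hc
    exact hp hc
  have hqi := hq i
  have hle := abs_le.mp (abs_sub_le_dist1 p q i)
  exact ⟨i, by omega⟩

lemma mem_box_of_mem_Vset {p : V d} (hp : p ∈ Vset d n) : p ∈ box d n := by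
  rw [box, Fintype.mem_piFinset]
  intro i
  rw [Finset.mem_Icc]
  rcases hp with hp | ⟨-, q, hq, hpq⟩
  · have := hp i
    omega
  · have hqi := hq i
    have hle := abs_le.mp (abs_sub_le_dist1 p q i)
    omega

lemma sum1_pos_of_mem_Dset (hd : 0 < d) {p : V d} (hp : p ∈ Dset d n) : 0 < sum1 p :=
  Finset.sum_pos (fun i _ => (hp i).1) ⟨⟨0, hd⟩, mem_univ _⟩

lemma exists_adj_sum1_eq_sub_one (hd : 0 < d) {p : V d} (hp : p ∈ Dset d n) :
    ∃ q, Adj d n p q ∧ sum1 q = sum1 p - 1 := by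
  set i : Fin d := ⟨0, hd⟩
  set q := Function.update p i (p i - 1)
  have hqi : q i = p i - 1 := Function.update_self i _ p
  have hpq : dist1 p q = 1 := by
    rw [dist1, Finset.sum_eq_single i]
    · simp [hqi]
    · intro j _ hj
      simp [q, Function.update_of_ne hj]
    · simp
  have hq : q ∈ Vset d n := by
    by_cases h2 : 2 ≤ p i
    · left
      intro j
      by_cases hj : j = i
      · have := hp i
        rw [hj, hqi]
        omega
      · simpa [q, Function.update_of_ne hj] using hp j
    · right
      refine ⟨fun hqD => ?_, p, hp, dist1_comm p q ▸ hpq⟩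
      have := (hqD i).1
      omega
  refine ⟨q, ⟨hpq, Or.inl hp, hq, Or.inl hp⟩, ?_⟩
  have := sum1_sub_sum1_of_dist1_eq_one hpq (i := i) (by omega)
  omega

end Lattice

section Harmonic

variable {d n : ℕ} {γ : V d → V d → ℝ}

lemma lap_congr {f g : V d → ℝ} {p : V d} (hp : f p = g p)
    (hnbr : ∀ q, Adj d n p q → f q = g q) : lap d n γ f p = lap d n γ g p :=
  Finset.sum_congr rfl fun q hq => by rw [hp, hnbr q (Finset.mem_filter.mp hq).2]

lemma lap_sub (f g : V d → ℝ) (p : V d) :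
    lap d n γ (f - g) p = lap d n γ f p - lap d n γ g p := by
  rw [lap, lap, lap, ← Finset.sum_sub_distrib]
  exact Finset.sum_congr rfl fun _ _ => by simp only [Pi.sub_apply]; ring

lemma two_mul_sum_mul_lap (hγ : ∀ p q, γ p q = γ q p) (v : V d → ℝ) :
    2 * ∑ p ∈ box d n, v p * lap d n γ v p =
      -∑ p ∈ box d n, ∑ q ∈ nbr d n p, γ q p * (v q - v p) ^ 2 := by
  have hlap : ∑ p ∈ box d n, v p * lap d n γ v p =
      ∑ p ∈ box d n, ∑ q ∈ nbr d n p, γ q p * (v p * (v q - v p)) := by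
    simp only [lap, Finset.mul_sum, mul_left_comm]
  have hswap : ∑ p ∈ box d n, ∑ q ∈ nbr d n p, γ q p * (v p * (v q - v p)) =
      ∑ p ∈ box d n, ∑ q ∈ nbr d n p, γ q p * (v q * (v p - v q)) := by
    simp only [nbr, Finset.sum_filter]
    rw [Finset.sum_comm]
    refine Finset.sum_congr rfl fun p _ => Finset.sum_congr rfl fun q _ => ?_
    by_cases h : Adj d n p q
    · rw [if_pos h.symm, if_pos h, hγ]
    · rw [if_neg fun h' => h h'.symm, if_neg h]
  rw [two_mul, hlap]
  nth_rw 2 [hswap]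
  rw [← Finset.sum_add_distrib, ← Finset.sum_neg_distrib]
  refine Finset.sum_congr rfl fun p _ => ?_
  rw [← Finset.sum_add_distrib, ← Finset.sum_neg_distrib]
  exact Finset.sum_congr rfl fun q _ => by ring

lemma eq_of_adj_of_sum_mul_lap_eq_zero (hγ : GoodCond d n γ) {v : V d → ℝ}
    (h : ∑ p ∈ box d n, v p * lap d n γ v p = 0) {p q : V d} (hpq : Adj d n p q) :
    v p = v q := by
  have hγqp : 0 < γ q p := hγ.2 q p hpq.symm
  have henergy : ∑ p ∈ box d n, ∑ q ∈ nbr d n p, γ q p * (v q - v p) ^ 2 = 0 := by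
    linarith [two_mul_sum_mul_lap (n := n) hγ.1 v]
  have hnonneg : ∀ p' ∈ box d n, ∀ q' ∈ nbr d n p', 0 ≤ γ q' p' * (v q' - v p') ^ 2 :=
    fun p' _ q' hq' => mul_nonneg (hγ.2 q' p' (Finset.mem_filter.mp hq').2.symm).le (sq_nonneg _)
  have hp : p ∈ box d n := mem_box_of_mem_Vset hpq.2.1
  have hq : q ∈ nbr d n p := Finset.mem_filter.mpr ⟨mem_box_of_mem_Vset hpq.2.2.1, hpq⟩
  have hterm : γ q p * (v q - v p) ^ 2 = 0 :=
    (Finset.sum_eq_zero_iff_of_nonneg (hnonneg p hp)).mp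
      ((Finset.sum_eq_zero_iff_of_nonneg fun p' hp' => Finset.sum_nonneg (hnonneg p' hp')).mp
        henergy p hp) q hq
  have hsq := (mul_eq_zero.mp hterm).resolve_left hγqp.ne'
  linarith [pow_eq_zero_iff two_ne_zero |>.mp hsq]

theorem eq_zero_of_lap_eq_zero (hγ : GoodCond d n γ) (hd : 0 < d) {A : Set (V d)}
    (hA : A ⊆ Dset d n) {v : V d → ℝ} (hv : ∀ p ∉ A, v p = 0)
    (hlap : ∀ p ∈ A, lap d n γ v p = 0) (p : V d) : v p = 0 := by
  have hS : ∑ p ∈ box d n, v p * lap d n γ v p = 0 := Finset.sum_eq_zero fun p _ => by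
    by_cases hp : p ∈ A
    · rw [hlap p hp, mul_zero]
    · rw [hv p hp, zero_mul]
  have hdescent : ∀ k : ℕ, ∀ p ∈ A, sum1 p ≤ k → v p = 0 := by
    intro k
    induction k with
    | zero =>
      intro p hp hle
      have := sum1_pos_of_mem_Dset hd (hA hp)
      omega
    | succ k ih =>
      intro p hp hle
      obtain ⟨q, hpq, hq⟩ := exists_adj_sum1_eq_sub_one hd (hA hp)
      rw [eq_of_adj_of_sum_mul_lap_eq_zero hγ hS hpq]
      by_cases hqA : q ∈ A
      · exact ih q hqA (by omega)
      · exact hv q hqA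
  by_cases hp : p ∈ A
  · exact hdescent _ p hp (Int.self_le_toNat _)
  · exact hv p hp

end Harmonic

section Interface

variable {d n : ℕ} {t : ℤ}

lemma add_one_le_sum1_of_dist1_eq_one {p q : V d} (hp : p ∈ Bset d n \ JS d n t)
    (hq : q ∈ Dset d n) (hpq : dist1 p q = 1) : t + 1 ≤ sum1 q := by
  have hqp := dist1_comm p q ▸ hpq
  obtain ⟨hpB, hpJ⟩ := hp
  obtain ⟨i, hi | hi⟩ := exists_eq_zero_or_eq_add_one_of_dist1_eq_one hpB.1 hq hpq
  · have hs := sum1_eq_sub_one_of_dist1_eq_one hq hqp hi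
    have : ¬sum1 p ≤ t := fun hle => hpJ (Or.inl ⟨hpB, hle, i, hi⟩)
    omega
  · have hs := sum1_eq_add_one_of_dist1_eq_one hq hqp hi
    have : ¬sum1 p ≤ t + 1 := fun hle => hpJ (Or.inr ⟨hpB, hle, i, hi⟩)
    omega

lemma mem_L_or_mem_Bset_diff_JS_of_adj {p q : V d} (hp : p ∈ Dset d n \ LS d n (t + 1))
    (hpq : Adj d n p q) (hq : q ∉ Dset d n \ LS d n (t + 1)) :
    q ∈ L d n (t + 1) ∨ q ∈ Bset d n \ JS d n t := by
  have hsp : t + 1 < sum1 p := lt_of_not_ge fun hle => hp.2 ⟨hp.1, hle⟩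
  rcases hpq.2.2.1 with hqD | hqB
  · have hclose := abs_le.mp (abs_sum1_sub_sum1_le_dist1 p q)
    have : sum1 q ≤ t + 1 := le_of_not_gt fun hlt => hq ⟨hqD, fun h => by have := h.2; omega⟩
    exact Or.inl ⟨hqD, by rw [hpq.1] at hclose; omega⟩
  · refine Or.inr ⟨hqB, ?_⟩
    rintro (⟨-, hle, i, hi⟩ | ⟨-, hle, i, hi⟩)
    · have := sum1_eq_sub_one_of_dist1_eq_one hp.1 hpq.1 hi
      omega
    · have := sum1_eq_add_one_of_dist1_eq_one hp.1 hpq.1 hi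
      omega

end Interface

/-- `T^{(t)} = T₂^{(t)} ∘ T₁^{(t)}` stated on solutions: `u` is the harmonic extension of `φ`, so
`T₁ φ = u|_{L_{t+1}}`, and `w` solves the Dirichlet problem of `G^{(t)}` with that interface data,
so `T₂ (T₁ φ)` is the current of `w`. -/
theorem stmt4_general (d n : ℕ) (hd : 2 ≤ d)
    (γ : V d → V d → ℝ) (hγ : GoodCond d n γ)
    (t : ℤ)
    (φ u w : V d → ℝ)
    (hφ : ∀ p, p ∉ JS d n t → φ p = 0)
    (hu : IsSol d n γ φ u)
    (hwharm : ∀ p ∈ Dset d n \ LS d n (t + 1), lap d n γ w p = 0)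
    (hwL : ∀ p ∈ L d n (t + 1), w p = u p)
    (hwB : ∀ p ∈ Bset d n \ JS d n t, w p = 0) :
    ∀ p ∈ Bset d n \ JS d n t, cur d n γ u p = cur d n γ w p := by
  obtain ⟨-, huharm, huB⟩ := hu
  set A := Dset d n \ LS d n (t + 1)
  have hbdry : ∀ p ∈ Bset d n \ JS d n t, u p = w p := fun p hp => by
    rw [huB p hp.1, hφ p hp.2, hwB p hp]
  have hfringe : ∀ p ∈ A, ∀ q ∉ A, Adj d n p q → u q = w q := fun p hp q hq hpq => by
    rcases mem_L_or_mem_Bset_diff_JS_of_adj hp hpq hq with hqL | hqB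
    · exact (hwL q hqL).symm
    · exact hbdry q hqB
  have hA : ∀ p ∈ A, u p = w p := fun p hp => by
    have hv := eq_zero_of_lap_eq_zero hγ (by omega) Set.sdiff_subset
      (v := A.indicator (u - w)) (fun q hq => Set.indicator_of_notMem hq _) (fun q hq => by
        rw [lap_congr (g := u - w) (Set.indicator_of_mem hq _) fun r hqr => ?_, lap_sub,
          huharm q hq.1, hwharm q hq, sub_zero]
        by_cases hr : r ∈ A
        · exact Set.indicator_of_mem hr _
        · rw [Set.indicator_of_notMem hr, Pi.sub_apply, hfringe q hq r hr hqr, sub_self]) p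
    rwa [Set.indicator_of_mem hp, Pi.sub_apply, sub_eq_zero] at hv
  intro p hp
  refine Finset.sum_congr rfl fun q hq => ?_
  obtain ⟨hqnbr, hqD⟩ := Finset.mem_filter.mp hq
  have hsq := add_one_le_sum1_of_dist1_eq_one hp hqD (Finset.mem_filter.mp hqnbr).2.1
  have huq : u q = w q := by
    rcases hsq.eq_or_lt with heq | hlt
    · exact (hwL q ⟨hqD, heq.symm⟩).symm
    · exact hA q ⟨hqD, fun h => by have := h.2; omega⟩
  rw [hbdry p hp, huq]

/-- factorization `T^{(t)} = T₂^{(t)} ∘ T₁^{(t)}` of the DtN submatrix,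
stated relationally: if `u` solves the Dirichlet problem on `G` with boundary data
`φ` supported on `J_t^S`, and `w` solves the Dirichlet problem on the upper subgraph
`G^{(t)}` with data `u|_{L_{t+1}}` on the interface and `0` on `∂D \ J_t^S`, then the
two boundary currents agree on `∂D \ J_t^S`. -/
theorem stmt4 (d n : ℕ) (hd : 2 ≤ d) (hn : 1 ≤ n)
    (γ : V d → V d → ℝ) (hγ : GoodCond d n γ)
    (t : ℤ) (ht1 : (d : ℤ) - 1 ≤ t) (ht2 : t ≤ (d : ℤ) * n - 1)
    (φ u w : V d → ℝ)
    (hφ : ∀ p, p ∉ JS d n t → φ p = 0)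
    (hu : IsSol d n γ φ u)
    (hwsupp : ∀ p, p ∉ Vset d n \ (LS d n t ∪ JS d n t) → w p = 0)
    (hwharm : ∀ p ∈ Dset d n \ LS d n (t + 1), lap d n γ w p = 0)
    (hwL : ∀ p ∈ L d n (t + 1), w p = u p)
    (hwB : ∀ p ∈ Bset d n \ JS d n t, w p = 0) :
    ∀ p ∈ Bset d n \ JS d n t, cur d n γ u p = cur d n γ w p :=
  stmt4_general d n hd γ hγ t φ u w hφ hu hwharm hwL hwB
end DiscreteCalderon
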